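/- For every positive integer n, the sum over k from 1 to n of H_{n−k}/(k(k+1)(k+2)) equals ((n^2+3n−2)/(4(n+1)(n+2)))·H_{n+1} − (3n−1)/(4(n+1)^2). -/
import Mathlib


/-- The `n`-th harmonic number `H_n = ∑_{k=1}^n 1/k`, with `H_0 = 0`. -/
def H (n : ℕ) : ℚ := ∑ k ∈ Finset.range n, 1 / ((k : ℚ) + 1)

/-- The generalized harmonic number of order 2, `H_n^{(2)} = ∑_{k=1}^n 1/k^2`, with `H_0^{(2)} = 0`. -/
def H2 (n : ℕ) : ℚ := ∑ k ∈ Finset.range n, 1 / ((k : ℚ) + 1) ^ 2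

lemma H_succ (n : ℕ) : H (n + 1) = H n + 1 / ((n : ℚ) + 1) := by
  simp [H, Finset.sum_range_succ]

lemma sumA (n : ℕ) : ∑ k ∈ Finset.Icc 1 n, (1 : ℚ) / (k : ℚ) = H n := by
  induction n with
  | zero => simp [H]
  | succ n ih =>
    rw [Finset.sum_Icc_succ_top (by omega), ih, H_succ]
    push_cast; ring

lemma sumB (n : ℕ) : ∑ k ∈ Finset.Icc 1 n, (1 : ℚ) / ((k : ℚ) + 1) = H (n + 1) - 1 := by
  induction n with
  | zero => simp [H]
  | succ n ih =>
    rw [Finset.sum_Icc_succ_top (by omega), ih, H_succ (n + 1)]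
    push_cast; ring

lemma sumC (n : ℕ) : ∑ k ∈ Finset.Icc 1 n, (1 : ℚ) / ((k : ℚ) + 2) = H (n + 2) - 3 / 2 := by
  induction n with
  | zero =>
    simp [H, Finset.sum_range_succ]
    norm_num
  | succ n ih =>
    rw [Finset.sum_Icc_succ_top (by omega), ih, H_succ (n + 2)]
    push_cast; ring

lemma sumR (n : ℕ) : ∑ k ∈ Finset.Icc 1 n, (1 : ℚ) / ((n : ℚ) + 1 - (k : ℚ)) = H n := by
  rw [← sumA n]
  apply Finset.sum_nbij' (fun k => n + 1 - k) (fun k => n + 1 - k) <;>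
    intro a ha <;> rw [Finset.mem_Icc] at ha
  · rw [Finset.mem_Icc]; omega
  · rw [Finset.mem_Icc]; omega
  · omega
  · omega
  · have : ((n + 1 - a : ℕ) : ℚ) = (n : ℚ) + 1 - (a : ℚ) := by
      push_cast [Nat.cast_sub (by omega : a ≤ n + 1)]; ring
    rw [this]

lemma pf (n k : ℕ) (h1 : 1 ≤ k) (h2 : k ≤ n) :
    1 / (((n : ℚ) + 1 - (k : ℚ)) * ((k : ℚ) * ((k : ℚ) + 1) * ((k : ℚ) + 2))) =
      (1 / (((n : ℚ) + 1) * ((n : ℚ) + 2) * ((n : ℚ) + 3))) * (1 / ((n : ℚ) + 1 - (k : ℚ)))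
      + (1 / (2 * ((n : ℚ) + 1))) * (1 / (k : ℚ))
      - (1 / ((n : ℚ) + 2)) * (1 / ((k : ℚ) + 1))
      + (1 / (2 * ((n : ℚ) + 3))) * (1 / ((k : ℚ) + 2)) := by
  have hk : (1 : ℚ) ≤ (k : ℚ) := by exact_mod_cast h1
  have hkn : (k : ℚ) ≤ (n : ℚ) := by exact_mod_cast h2
  have h0 : ((n : ℚ) + 1 - (k : ℚ)) ≠ 0 := by nlinarith
  have h0' : (k : ℚ) ≠ 0 := by nlinarith
  have h1' : (k : ℚ) + 1 ≠ 0 := by nlinarith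
  have h2' : (k : ℚ) + 2 ≠ 0 := by nlinarith
  have h3 : (n : ℚ) + 1 ≠ 0 := by nlinarith
  have h4 : (n : ℚ) + 2 ≠ 0 := by nlinarith
  have h5 : (n : ℚ) + 3 ≠ 0 := by nlinarith
  field_simp
  ring

lemma Dsum (n : ℕ) :
    ∑ k ∈ Finset.Icc 1 n,
        1 / (((n : ℚ) + 1 - (k : ℚ)) * ((k : ℚ) * ((k : ℚ) + 1) * ((k : ℚ) + 2))) =
      (1 / (((n : ℚ) + 1) * ((n : ℚ) + 2) * ((n : ℚ) + 3))) * H n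
      + (1 / (2 * ((n : ℚ) + 1))) * H n
      - (1 / ((n : ℚ) + 2)) * (H (n + 1) - 1)
      + (1 / (2 * ((n : ℚ) + 3))) * (H (n + 2) - 3 / 2) := by
  have step := Finset.sum_congr rfl fun k hk =>
    pf n k (Finset.mem_Icc.mp hk).1 (Finset.mem_Icc.mp hk).2
  rw [step]
  simp only [Finset.sum_add_distrib, Finset.sum_sub_distrib, ← Finset.mul_sum]
  rw [sumR, sumA, sumB, sumC]

theorem stmt_18 (n : ℕ) (hn : 0 < n) :
    ∑ k ∈ Finset.Icc 1 n, H (n - k) / ((k : ℚ) * ((k : ℚ) + 1) * ((k : ℚ) + 2)) =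
      (((n : ℚ) ^ 2 + 3 * (n : ℚ) - 2) / (4 * ((n : ℚ) + 1) * ((n : ℚ) + 2))) * H (n + 1)
        - (3 * (n : ℚ) - 1) / (4 * ((n : ℚ) + 1) ^ 2) := by
  induction n with
  | zero => omega
  | succ m ih =>
    rcases Nat.eq_zero_or_pos m with rfl | hm
    · simp [H, Finset.sum_range_succ]
      norm_num
    · have IH := ih hm
      rw [Finset.sum_Icc_succ_top (by omega : 1 ≤ m + 1)]
      have hsplit : ∀ k ∈ Finset.Icc 1 m,
          H (m + 1 - k) / ((k : ℚ) * ((k : ℚ) + 1) * ((k : ℚ) + 2)) =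
            H (m - k) / ((k : ℚ) * ((k : ℚ) + 1) * ((k : ℚ) + 2))
            + 1 / (((m : ℚ) + 1 - (k : ℚ)) * ((k : ℚ) * ((k : ℚ) + 1) * ((k : ℚ) + 2))) := by
        intro k hk
        rw [Finset.mem_Icc] at hk
        have h1 : m + 1 - k = (m - k) + 1 := by omega
        rw [h1, H_succ]
        have h2 : ((m - k : ℕ) : ℚ) = (m : ℚ) - (k : ℚ) := by
          push_cast [Nat.cast_sub hk.2]; ring
        rw [h2]
        have h3 : (m : ℚ) + 1 - (k : ℚ) = (m : ℚ) - (k : ℚ) + 1 := by ring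
        rw [h3, add_div, div_div]
      rw [Finset.sum_congr rfl hsplit, Finset.sum_add_distrib, IH, Dsum m]
      have htop : H (m + 1 - (m + 1)) = 0 := by simp [H]
      rw [htop]
      have e1 : H (m + 2) = H (m + 1) + 1 / ((m : ℚ) + 2) := by
        rw [H_succ (m + 1)]; push_cast; ring
      have e2 : H m = H (m + 1) - 1 / ((m : ℚ) + 1) := by
        rw [H_succ m]; ring
      rw [e1, e2]
      have h1 : ((m : ℚ) + 1) ≠ 0 := by positivity
      have h2 : ((m : ℚ) + 2) ≠ 0 := by positivity
      have h3 : ((m : ℚ) + 3) ≠ 0 := by positivity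
      push_cast
      field_simp
      ring
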